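/- Let H be a complex Hilbert space and let R = (R_1,…,R_d) be a commuting d-tuple of bounded linear operators on H that is (m,n)-isosymmetric (Λ_{m,n}(R) = 0), with m, n positive integers. If μ = (μ_1,…,μ_d) ∈ ℂ^d lies in the joint approximate point spectrum of R, i.e. there exists a sequence (u_k) of unit vectors in H with ‖(R_l − μ_l)u_k‖ → 0 for every l = 1,…,d, then either Σ_{l=1}^{d} |μ_l|² = 1 or μ_1 + ⋯ + μ_d is real (its imaginary part is zero). -/

import Mathlib

open Finset ContinuousLinearMap
open scoped InnerProductSpace

variable {H : Type*} [NormedAddCommGroup H] [InnerProductSpace ℂ H] [CompleteSpace H]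

/-- `R^γ = R_1^{γ_1} ⋯ R_d^{γ_d}` for a multi-index `γ`. -/
noncomputable def opPow {d : ℕ} (R : Fin d → H →L[ℂ] H) (γ : Fin d → ℕ) : H →L[ℂ] H :=
  (List.ofFn fun i => (R i) ^ (γ i)).prod

/-- `M_m(R) = Σ_{k=0}^{m} (−1)^{m−k} C(m,k) Σ_{|γ|=k} (k!/γ!) R*^γ R^γ`. -/
noncomputable def Mop {d : ℕ} (R : Fin d → H →L[ℂ] H) (m : ℕ) : H →L[ℂ] H :=
  ∑ k ∈ Finset.range (m + 1), ((-1 : ℂ) ^ (m - k) * (m.choose k : ℂ)) •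
    ∑ γ ∈ Finset.Nat.antidiagonalTuple d k,
      ((Nat.multinomial Finset.univ γ : ℕ) : ℂ) •
        (opPow (fun i => ContinuousLinearMap.adjoint (R i)) γ * opPow R γ)

/-- `S_n(R) = Σ_{k=0}^{n} (−1)^{n−k} C(n,k) (R_1*+⋯+R_d*)^k (R_1+⋯+R_d)^{n−k}`. -/
noncomputable def Sop {d : ℕ} (R : Fin d → H →L[ℂ] H) (n : ℕ) : H →L[ℂ] H :=
  ∑ k ∈ Finset.range (n + 1), ((-1 : ℂ) ^ (n - k) * (n.choose k : ℂ)) •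
    ((∑ i, ContinuousLinearMap.adjoint (R i)) ^ k * (∑ i, R i) ^ (n - k))

/-- `Λ_{m,n}(R) = Σ_{k=0}^{n} (−1)^{n−k} C(n,k) (R_1*+⋯+R_d*)^k M_m(R) (R_1+⋯+R_d)^{n−k}`. -/
noncomputable def Lam {d : ℕ} (R : Fin d → H →L[ℂ] H) (m n : ℕ) : H →L[ℂ] H :=
  ∑ k ∈ Finset.range (n + 1), ((-1 : ℂ) ^ (n - k) * (n.choose k : ℂ)) •
    ((∑ i, ContinuousLinearMap.adjoint (R i)) ^ k * Mop R m * (∑ i, R i) ^ (n - k))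

/-! If `u` is a sequence of unit vectors with `R_i u_k - μ_i u_k → 0`, then every operator built
from the `R_i` by products, sums and adjoints acts like a scalar in the limit of the quadratic
form `⟪u_k, · u_k⟫`. By the multinomial and binomial theorems this gives
`⟪u_k, M_m(R) u_k⟫ → (Σ |μ_i|² - 1)^m` and then
`⟪u_k, Λ_{m,n}(R) u_k⟫ → (conj s - s)^n (Σ |μ_i|² - 1)^m` with `s = Σ μ_i`.
Isosymmetry makes this limit zero, so one of the two factors vanishes. -/

open Filter Topology
open scoped ComplexConjugate

theorem sub_pow_eq_sum_neg_one_pow_mul_choose {A : Type*} [CommRing A] (x y : A) (n : ℕ) :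
    (x - y) ^ n =
      ∑ k ∈ range (n + 1), (-1) ^ (n - k) * (n.choose k : A) * (x ^ k * y ^ (n - k)) := by
  rw [sub_eq_add_neg, add_pow]
  refine sum_congr rfl fun k _ => ?_
  rw [neg_pow]
  ring

section ApproxEigen

variable {𝕜 E : Type*} [NormedField 𝕜] [NormedAddCommGroup E] [NormedSpace 𝕜 E]

def IsApproxEigen (u : ℕ → E) (T : E →L[𝕜] E) (c : 𝕜) : Prop :=
  Tendsto (fun k => T (u k) - c • u k) atTop (𝓝 0)

namespace IsApproxEigen

variable {u : ℕ → E} {T T' : E →L[𝕜] E} {c c' : 𝕜}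

theorem one (u : ℕ → E) : IsApproxEigen u (1 : E →L[𝕜] E) 1 := by
  simp [IsApproxEigen]

theorem mul (h : IsApproxEigen u T c) (h' : IsApproxEigen u T' c') :
    IsApproxEigen u (T * T') (c * c') := by
  have hT : Tendsto (fun k => T (T' (u k) - c' • u k)) atTop (𝓝 0) :=
    (T.continuous.tendsto' 0 0 (map_zero T)).comp h'
  have hsum := hT.add (h.const_smul c')
  rw [smul_zero, add_zero] at hsum
  refine hsum.congr fun k => ?_
  simp only [mul_apply_eq_comp, map_sub, map_smul, smul_sub, smul_smul, mul_comm c']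
  abel

theorem pow (h : IsApproxEigen u T c) (j : ℕ) : IsApproxEigen u (T ^ j) (c ^ j) := by
  induction j with
  | zero => simpa using one u
  | succ j ih => simpa only [pow_succ] using ih.mul h

theorem sum {ι : Type*} {s : Finset ι} {T : ι → E →L[𝕜] E} {c : ι → 𝕜}
    (h : ∀ i ∈ s, IsApproxEigen u (T i) (c i)) :
    IsApproxEigen u (∑ i ∈ s, T i) (∑ i ∈ s, c i) := by
  have hsum := tendsto_finsetSum s h
  rw [Finset.sum_const_zero] at hsum
  refine hsum.congr fun k => ?_
  rw [_root_.sum_apply, Finset.sum_sub_distrib, Finset.sum_smul]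

end IsApproxEigen

end ApproxEigen

section InnerLimits

variable {𝕜 E : Type*} [RCLike 𝕜] [NormedAddCommGroup E] [InnerProductSpace 𝕜 E] {u : ℕ → E}

theorem tendsto_inner_sum_smul {ι : Type*} (s : Finset ι) (a : ι → 𝕜) {X : ι → E →L[𝕜] E}
    {z : ι → 𝕜} (h : ∀ i ∈ s, Tendsto (fun k => ⟪u k, X i (u k)⟫_𝕜) atTop (𝓝 (z i))) :
    Tendsto (fun k => ⟪u k, (∑ i ∈ s, a i • X i) (u k)⟫_𝕜) atTop (𝓝 (∑ i ∈ s, a i * z i)) := by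
  simp only [_root_.sum_apply, smul_apply, inner_sum, inner_smul_right]
  exact tendsto_finsetSum s fun i hi => (h i hi).const_mul (a i)

theorem IsApproxEigen.tendsto_inner_apply_apply (hu : ∀ k, ‖u k‖ = 1) {S T B : E →L[𝕜] E}
    {c c' z : 𝕜} (hS : IsApproxEigen u S c) (hT : IsApproxEigen u T c')
    (hB : Tendsto (fun k => ⟪u k, B (u k)⟫_𝕜) atTop (𝓝 z)) :
    Tendsto (fun k => ⟪S (u k), B (T (u k))⟫_𝕜) atTop (𝓝 (conj c * c' * z)) := by
  have hleft : Tendsto (fun k => ⟪S (u k) - c • u k, B (T (u k))⟫_𝕜) atTop (𝓝 0) := by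
    have hbound : Tendsto (fun k => ‖S (u k) - c • u k‖ * (‖B‖ * ‖T‖)) atTop (𝓝 0) := by
      simpa using (tendsto_zero_iff_norm_tendsto_zero.1 hS).mul_const (‖B‖ * ‖T‖)
    refine squeeze_zero_norm (fun k => ?_) hbound
    calc ‖⟪S (u k) - c • u k, B (T (u k))⟫_𝕜‖
        ≤ ‖S (u k) - c • u k‖ * ‖B (T (u k))‖ := norm_inner_le_norm _ _
      _ ≤ ‖S (u k) - c • u k‖ * (‖B‖ * ‖T‖) := by
        gcongr
        refine (B.le_opNorm _).trans ?_
        gcongr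
        simpa [hu k] using T.le_opNorm (u k)
  have hright : Tendsto (fun k => ⟪u k, B (T (u k) - c' • u k)⟫_𝕜) atTop (𝓝 0) := by
    have hB0 : Tendsto (fun k => B (T (u k) - c' • u k)) atTop (𝓝 0) :=
      (B.continuous.tendsto' 0 0 (map_zero B)).comp hT
    refine squeeze_zero_norm (fun k => ?_) (tendsto_zero_iff_norm_tendsto_zero.1 hB0)
    simpa [hu k] using norm_inner_le_norm (𝕜 := 𝕜) (u k) (B (T (u k) - c' • u k))
  -- `⟪Su, BTu⟫ = ⟪Su - cu, BTu⟫ + conj c ⟪u, B(Tu - c'u)⟫ + conj c c' ⟪u, Bu⟫`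
  have hsum := (hleft.add (hright.const_mul (conj c))).add (hB.const_mul (conj c * c'))
  rw [mul_zero, add_zero, zero_add] at hsum
  refine hsum.congr fun k => ?_
  simp only [map_sub, map_smul, inner_sub_left, inner_sub_right, inner_smul_left,
    inner_smul_right]
  ring

end InnerLimits

omit [CompleteSpace H] in
theorem opPow_zero (R : Fin 0 → H →L[ℂ] H) (γ : Fin 0 → ℕ) : opPow R γ = 1 := rfl

omit [CompleteSpace H] in
theorem opPow_succ {d : ℕ} (R : Fin (d + 1) → H →L[ℂ] H) (γ : Fin (d + 1) → ℕ) :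
    opPow R γ = R 0 ^ γ 0 * opPow (fun i => R i.succ) (fun i => γ i.succ) := by
  simp [opPow, List.ofFn_succ]

section ApproxEigenHilbert

variable {u : ℕ → H}

omit [CompleteSpace H] in
theorem isApproxEigen_opPow {d : ℕ} {R : Fin d → H →L[ℂ] H} {μ : Fin d → ℂ}
    (hR : ∀ i, IsApproxEigen u (R i) (μ i)) (γ : Fin d → ℕ) :
    IsApproxEigen u (opPow R γ) (∏ i, μ i ^ γ i) := by
  induction d with
  | zero => simpa [opPow_zero] using IsApproxEigen.one u
  | succ d ih =>
    rw [opPow_succ, Fin.prod_univ_succ]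
    exact ((hR 0).pow _).mul (ih (fun i => hR i.succ) _)

theorem isApproxEigen_adjoint_opPow_adjoint {d : ℕ} {R : Fin d → H →L[ℂ] H} {μ : Fin d → ℂ}
    (hR : ∀ i, IsApproxEigen u (R i) (μ i)) (γ : Fin d → ℕ) :
    IsApproxEigen u (adjoint (opPow (fun i => adjoint (R i)) γ)) (∏ i, μ i ^ γ i) := by
  induction d with
  | zero => simpa [opPow_zero, ← star_eq_adjoint] using IsApproxEigen.one u
  | succ d ih =>
    rw [opPow_succ, ← star_eq_adjoint, star_mul, star_pow, star_eq_adjoint, star_eq_adjoint,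
      adjoint_adjoint, Fin.prod_univ_succ, mul_comm]
    exact (ih (fun i => hR i.succ) _).mul ((hR 0).pow _)

theorem tendsto_inner_Mop (hu : ∀ k, ‖u k‖ = 1) {d : ℕ} {R : Fin d → H →L[ℂ] H}
    {μ : Fin d → ℂ} (hR : ∀ i, IsApproxEigen u (R i) (μ i)) (m : ℕ) :
    Tendsto (fun k => ⟪u k, Mop R m (u k)⟫_ℂ) atTop
      (𝓝 ((∑ i, (‖μ i‖ : ℂ) ^ 2 - 1) ^ m)) := by
  have hone : Tendsto (fun k => ⟪u k, (1 : H →L[ℂ] H) (u k)⟫_ℂ) atTop (𝓝 1) := by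
    simp [inner_self_eq_norm_sq_to_K, hu]
  have hterm : ∀ γ : Fin d → ℕ, Tendsto
      (fun k => ⟪u k, (opPow (fun i => adjoint (R i)) γ * opPow R γ) (u k)⟫_ℂ) atTop
      (𝓝 (∏ i, ((‖μ i‖ : ℂ) ^ 2) ^ γ i)) := by
    intro γ
    have hlim := (isApproxEigen_adjoint_opPow_adjoint hR γ).tendsto_inner_apply_apply hu
      (isApproxEigen_opPow hR γ) hone
    convert hlim using 2 with k
    · rw [mul_apply_eq_comp, one_apply_eq_self, adjoint_inner_left]
    · simp only [map_prod, map_pow, mul_one, ← prod_mul_distrib, ← mul_pow, Complex.conj_mul']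
  have hlim := tendsto_inner_sum_smul (u := u) (range (m + 1))
    (fun j => (-1 : ℂ) ^ (m - j) * (m.choose j : ℂ)) fun j _ =>
      tendsto_inner_sum_smul (Nat.antidiagonalTuple d j)
        (fun γ => ((Nat.multinomial univ γ : ℕ) : ℂ)) fun γ _ => hterm γ
  unfold Mop
  convert hlim using 2
  rw [sub_pow_eq_sum_neg_one_pow_mul_choose]
  refine sum_congr rfl fun j _ => ?_
  rw [one_pow, mul_one, sum_pow_eq_sum_piAntidiag, piAntidiag_univ_fin_eq_antidiagonalTuple]

theorem tendsto_inner_Lam (hu : ∀ k, ‖u k‖ = 1) {d : ℕ} {R : Fin d → H →L[ℂ] H}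
    {μ : Fin d → ℂ} (hR : ∀ i, IsApproxEigen u (R i) (μ i)) (m n : ℕ) :
    Tendsto (fun k => ⟪u k, Lam R m n (u k)⟫_ℂ) atTop
      (𝓝 ((conj (∑ i, μ i) - ∑ i, μ i) ^ n * (∑ i, (‖μ i‖ : ℂ) ^ 2 - 1) ^ m)) := by
  have hsum : IsApproxEigen u (∑ i, R i) (∑ i, μ i) := IsApproxEigen.sum fun i _ => hR i
  have hterm : ∀ j, Tendsto
      (fun k => ⟪u k, ((∑ i, adjoint (R i)) ^ j * Mop R m * (∑ i, R i) ^ (n - j)) (u k)⟫_ℂ)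
      atTop (𝓝 (conj ((∑ i, μ i) ^ j) * (∑ i, μ i) ^ (n - j) *
        (∑ i, (‖μ i‖ : ℂ) ^ 2 - 1) ^ m)) := by
    intro j
    have hadj : (∑ i, adjoint (R i)) ^ j = adjoint ((∑ i, R i) ^ j) := by
      simp only [← star_eq_adjoint, star_pow, star_sum]
    have hlim := (hsum.pow j).tendsto_inner_apply_apply hu (hsum.pow (n - j))
      (tendsto_inner_Mop hu hR m)
    convert hlim using 2 with k
    rw [hadj, mul_apply_eq_comp, mul_apply_eq_comp, adjoint_inner_right]
  have hlim := tendsto_inner_sum_smul (u := u) (range (n + 1))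
    (fun j => (-1 : ℂ) ^ (n - j) * (n.choose j : ℂ)) fun j _ => hterm j
  unfold Lam
  convert hlim using 2
  rw [sub_pow_eq_sum_neg_one_pow_mul_choose, sum_mul]
  refine sum_congr rfl fun j _ => ?_
  rw [map_pow]
  ring

end ApproxEigenHilbert

theorem joint_approx_spectrum_alternative_general {d : ℕ} (R : Fin d → H →L[ℂ] H)
    (m n : ℕ) (hiso : Lam R m n = 0) (μ : Fin d → ℂ)
    (hmu : ∃ u : ℕ → H, (∀ k, ‖u k‖ = 1) ∧
      ∀ l, Filter.Tendsto (fun k => ‖R l (u k) - μ l • u k‖) Filter.atTop (nhds 0)) :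
    (∑ l, ‖μ l‖ ^ 2) = 1 ∨ (∑ l, μ l).im = 0 := by
  obtain ⟨u, hu, hμ⟩ := hmu
  have hR : ∀ l, IsApproxEigen u (R l) (μ l) := fun l =>
    tendsto_zero_iff_norm_tendsto_zero.2 (hμ l)
  have hzero : (conj (∑ l, μ l) - ∑ l, μ l) ^ n * (∑ l, (‖μ l‖ : ℂ) ^ 2 - 1) ^ m = 0 :=
    tendsto_nhds_unique (tendsto_inner_Lam hu hR m n) (by simp [hiso])
  rcases mul_eq_zero.1 hzero with h | h
  · exact Or.inr (Complex.conj_eq_iff_im.1 (sub_eq_zero.1 (eq_zero_of_pow_eq_zero h)))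
  · exact Or.inl (by exact_mod_cast sub_eq_zero.1 (eq_zero_of_pow_eq_zero h))

/-- if `R` is `(m,n)`-isosymmetric and `μ` lies in the joint approximate
point spectrum of `R`, then `Σ |μ_l|² = 1` or `μ_1+⋯+μ_d` is real. -/
theorem joint_approx_spectrum_alternative {d : ℕ} (R : Fin d → H →L[ℂ] H)
    (hcomm : ∀ i j, Commute (R i) (R j)) (m n : ℕ) (hm : 0 < m) (hn : 0 < n)
    (hiso : Lam R m n = 0) (μ : Fin d → ℂ)
    (hmu : ∃ u : ℕ → H, (∀ k, ‖u k‖ = 1) ∧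
      ∀ l, Filter.Tendsto (fun k => ‖R l (u k) - μ l • u k‖) Filter.atTop (nhds 0)) :
    (∑ l, ‖μ l‖ ^ 2) = 1 ∨ (∑ l, μ l).im = 0 :=
  joint_approx_spectrum_alternative_general R m n hiso μ hmu
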